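/- arXiv:2203.12477 — 3 statements merged into one kernel-verified Lean document; each statement's English description precedes it below -/
import Mathlib

section
/- Let l be a positive integer and write l = 3^m·l' with l' coprime to 3. For every r ≥ 1 and every word (b_1, …, b_r) ∈ {0,1,2}^r there exists a unique n with 0 ≤ n < 3^r such that the ternary digits of l·4^n in positions m+1 through m+r equal b_1, …, b_r; that is, writing l·4^n = Σ_{j=0}^∞ a_j(n)·3^j with a_j(n) ∈ {0,1,2}, one has a_{m+j}(n) = b_j for all 1 ≤ j ≤ r. -/
/-- The `i`-th ternary digit of `x` via `getD`. -/
theorem aux_getD (x i : ℕ) : (Nat.digits 3 x).getD i 0 = x / 3 ^ i % 3 := by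
  induction x using Nat.strong_induction_on generalizing i with
  | _ x ih =>
    rcases Nat.eq_zero_or_pos x with rfl | hx
    · simp
    rw [Nat.digits_def' (by norm_num) hx]
    cases i with
    | zero => simp
    | succ i =>
      simp only [List.getD_cons_succ]
      rw [ih (x / 3) (Nat.div_lt_self hx (by norm_num)) i,
        Nat.div_div_eq_div_mul, ← pow_succ']

/-- A number below `3 ^ r` is determined by its ternary digits below position `r`. -/
theorem aux_eq : ∀ r a c : ℕ, a < 3 ^ r → c < 3 ^ r →
    (∀ i < r, a / 3 ^ i % 3 = c / 3 ^ i % 3) → a = c := by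
  intro r
  induction r with
  | zero => intro a c ha hc _; simp at ha hc; omega
  | succ r ih =>
    intro a c ha hc h
    have h0 := h 0 (by omega)
    simp at h0
    have hd : a / 3 = c / 3 := by
      apply ih
      · exact Nat.div_lt_of_lt_mul (by rw [← pow_succ']; exact ha)
      · exact Nat.div_lt_of_lt_mul (by rw [← pow_succ']; exact hc)
      · intro i hi
        rw [Nat.div_div_eq_div_mul, Nat.div_div_eq_div_mul, ← pow_succ']
        exact h (i + 1) (by omega)
    omega

/-- Digits of a digit-sum. -/
theorem aux_T (r : ℕ) (b : ℕ → ℕ) (hb : ∀ i < r, b i < 3) :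
    (∑ i ∈ Finset.range r, b i * 3 ^ i) < 3 ^ r ∧
    ∀ i < r, (∑ i ∈ Finset.range r, b i * 3 ^ i) / 3 ^ i % 3 = b i := by
  induction r with
  | zero => simp
  | succ r ih =>
    obtain ⟨hlt, hdig⟩ := ih (fun i hi => hb i (by omega))
    rw [Finset.sum_range_succ]
    constructor
    · have h1 : b r * 3 ^ r ≤ 2 * 3 ^ r :=
        Nat.mul_le_mul_right _ (by have := hb r (by omega); omega)
      have h3 : (3:ℕ) ^ (r+1) = 3 ^ r * 3 := pow_succ 3 r
      omega
    · intro i hi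
      rcases Nat.lt_or_ge i r with hir | hir
      · have hrw : b r * 3 ^ r = b r * 3 ^ (r - i) * 3 ^ i := by
          rw [mul_assoc, ← pow_add]; congr 2; omega
        rw [hrw, Nat.add_mul_div_right _ _ (pow_pos (by norm_num : (0:ℕ) < 3) i)]
        have hrw2 : b r * 3 ^ (r - i) = b r * 3 ^ (r - i - 1) * 3 := by
          rw [mul_assoc, ← pow_succ]; congr 2; omega
        rw [hrw2, Nat.add_mul_mod_self_right]
        exact hdig i hir
      · have hie : i = r := by omega
        subst hie
        rw [Nat.add_mul_div_right _ _ (pow_pos (by norm_num : (0:ℕ) < 3) i)]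
        rw [Nat.div_eq_of_lt hlt]
        simp [Nat.mod_eq_of_lt (hb i (by omega))]

/-- Lifting-the-exponent core fact for `4 = 1 + 3`. -/
theorem aux_fourpow : ∀ r : ℕ, ∃ s : ℕ, 4 ^ 3 ^ r = 1 + 3 ^ (r + 1) * (1 + 3 * s) := by
  intro r
  induction r with
  | zero => exact ⟨0, by norm_num⟩
  | succ r ih =>
    obtain ⟨s, hs⟩ := ih
    refine ⟨s + (1 + 3 * s) ^ 2 * 3 ^ r + (1 + 3 * s) ^ 3 * 3 ^ (2 * r), ?_⟩
    have : (4 : ℕ) ^ 3 ^ (r + 1) = (4 ^ 3 ^ r) ^ 3 := by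
      rw [← pow_mul, pow_succ]
    rw [this, hs]; ring

/-- If `4 ^ k ≡ 1 (mod 3 ^ (r+1))` then `3 ^ r ∣ k`. -/
theorem aux_order (r k : ℕ) (h : 4 ^ k % 3 ^ (r + 1) = 1 % 3 ^ (r + 1)) : 3 ^ r ∣ k := by
  set N := 3 ^ (r + 1) with hN
  have hcast : (4 : ZMod N) ^ k = 1 := by
    have : ((4 ^ k : ℕ) : ZMod N) = ((1 : ℕ) : ZMod N) :=
      (ZMod.natCast_eq_natCast_iff _ _ _).mpr h
    simpa using this
  obtain ⟨s, hs⟩ := aux_fourpow r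
  have hone : (4 : ZMod N) ^ 3 ^ r = 1 := by
    have : ((4 ^ 3 ^ r : ℕ) : ZMod N) = ((1 + N * (1 + 3 * s) : ℕ) : ZMod N) := by
      rw [hs]
    push_cast at this
    rw [ZMod.natCast_self] at this
    simpa using this
  have hdvd : orderOf (4 : ZMod N) ∣ 3 ^ r := orderOf_dvd_of_pow_eq_one hone
  obtain ⟨t, htr, hts⟩ := (Nat.dvd_prime_pow Nat.prime_three).mp hdvd
  have ht : t = r := by
    by_contra hne
    have htlt : t < r := lt_of_le_of_ne htr hne
    obtain ⟨u, hu⟩ := aux_fourpow t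
    have hpow : (4 : ZMod N) ^ 3 ^ t = 1 := by rw [← hts]; exact pow_orderOf_eq_one _
    have hmod : (4 ^ 3 ^ t : ℕ) % N = 1 % N := by
      have : ((4 ^ 3 ^ t : ℕ) : ZMod N) = ((1 : ℕ) : ZMod N) := by push_cast; simpa using hpow
      exact (ZMod.natCast_eq_natCast_iff _ _ _).mp this
    have hdd : N ∣ 4 ^ 3 ^ t - 1 :=
      (Nat.modEq_iff_dvd' (Nat.one_le_iff_ne_zero.mpr (by positivity))).mp hmod.symm
    rw [hu, Nat.add_sub_cancel_left] at hdd
    have hcop : Nat.Coprime N (1 + 3 * u) :=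
      Nat.Coprime.pow_left _ ((Nat.prime_three.coprime_iff_not_dvd).mpr (by omega))
    have h1 : N ∣ 3 ^ (t + 1) := hcop.dvd_of_dvd_mul_right hdd
    have h2 := (Nat.pow_dvd_pow_iff_le_right (by norm_num : 1 < 3)).mp h1
    omega
  have hord : orderOf (4 : ZMod N) = 3 ^ r := by rw [hts, ht]
  exact hord ▸ orderOf_dvd_of_pow_eq_one hcast

/-- Let `l = 3^m · l'` be a positive integer with `l'` coprime to `3`. For every `r ≥ 1`
and every word `(b_1, …, b_r) ∈ {0,1,2}^r` there is a unique `0 ≤ n < 3^r` such that the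
ternary digits of `l·4ⁿ` in positions `m+1, …, m+r` are `b_1, …, b_r`. -/
theorem stmt9 (l l' m : ℕ) (hl : 0 < l) (hfact : l = 3 ^ m * l') (hcop : Nat.Coprime l' 3)
    (r : ℕ) (hr : 1 ≤ r) (b : ℕ → ℕ) (hb : ∀ j : ℕ, 1 ≤ j → j ≤ r → b j < 3) :
    ∃! n : ℕ, n < 3 ^ r ∧ ∀ j : ℕ, 1 ≤ j → j ≤ r →
      (Nat.digits 3 (l * 4 ^ n)).getD (m + j) 0 = b j := by
  set N := 3 ^ (r + 1) with hN
  have hNpos : 0 < N := by positivity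
  set g : ℕ → ℕ := fun n => l' * 4 ^ n % N / 3 with hg
  -- bound on g
  have hglt : ∀ n, g n < 3 ^ r := by
    intro n
    apply Nat.div_lt_of_lt_mul
    rw [← pow_succ']
    exact Nat.mod_lt _ hNpos
  -- digit condition rewritten in terms of g
  have hdigit : ∀ n, ∀ j, 1 ≤ j → j ≤ r →
      (Nat.digits 3 (l * 4 ^ n)).getD (m + j) 0 = g n / 3 ^ (j - 1) % 3 := by
    intro n j hj1 hjr
    rw [aux_getD]
    have h1 : l * 4 ^ n = 3 ^ m * (l' * 4 ^ n) := by rw [hfact]; ring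
    have h2 : (3:ℕ) ^ (m + j) = 3 ^ m * 3 ^ j := pow_add 3 m j
    rw [h1, h2, Nat.mul_div_mul_left _ _ (by positivity)]
    -- reduce mod N
    have h3 : l' * 4 ^ n / 3 ^ j % 3 = l' * 4 ^ n % N / 3 ^ j % 3 := by
      rw [← Nat.mod_mul_right_div_self, ← Nat.mod_mul_right_div_self,
        Nat.mod_mod_of_dvd _ (by rw [← pow_succ]; exact pow_dvd_pow 3 (by omega))]
    rw [h3]
    have h4 : l' * 4 ^ n % N / 3 ^ j = g n / 3 ^ (j - 1) := by
      rw [hg, Nat.div_div_eq_div_mul, ← pow_succ']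
      congr 2
      omega
    rw [h4]
  -- injectivity of g on [0, 3^r)
  have hinj : ∀ n1 n2, n1 < 3 ^ r → n2 < 3 ^ r → g n1 = g n2 → n1 = n2 := by
    have key : ∀ n1 n2, n1 ≤ n2 → n2 - n1 < 3 ^ r → g n1 = g n2 → n1 = n2 := by
      intro n1 n2 hle hlt hgeq
      have hmod3 : ∀ n : ℕ, l' * 4 ^ n % N % 3 = l' % 3 := by
        intro n
        rw [Nat.mod_mod_of_dvd _ (dvd_pow_self 3 (Nat.succ_ne_zero r))]
        have h41 : (4:ℕ) ≡ 1 [MOD 3] := by decide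
        have : l' * 4 ^ n ≡ l' * 1 ^ n [MOD 3] :=
          Nat.ModEq.mul_left l' (h41.pow n)
        simpa [Nat.ModEq] using this
      have hy : l' * 4 ^ n1 % N = l' * 4 ^ n2 % N := by
        have e1 := Nat.div_add_mod (l' * 4 ^ n1 % N) 3
        have e2 := Nat.div_add_mod (l' * 4 ^ n2 % N) 3
        have m1 := hmod3 n1
        have m2 := hmod3 n2
        rw [hg] at hgeq
        simp only at hgeq
        omega
      -- cancel l'
      have hcop' : Nat.gcd N l' = 1 := by
        have : Nat.Coprime l' N := hcop.pow_right (r + 1)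
        exact (Nat.coprime_comm.mp this)
      have h4 : (4:ℕ) ^ n1 ≡ 4 ^ n2 [MOD N] :=
        Nat.ModEq.cancel_left_of_coprime hcop' hy
      -- cancel 4 ^ n1
      have hsplit : (4:ℕ) ^ n2 = 4 ^ n1 * 4 ^ (n2 - n1) := by
        rw [← pow_add]; congr 1; omega
      have hcop4 : Nat.gcd N (4 ^ n1) = 1 := by
        have h43 : Nat.Coprime 4 3 := by decide
        have : Nat.Coprime (4 ^ n1) N := Nat.Coprime.pow n1 (r + 1) h43
        exact Nat.coprime_comm.mp this
      have h5 : (1:ℕ) ≡ 4 ^ (n2 - n1) [MOD N] := by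
        apply Nat.ModEq.cancel_left_of_coprime hcop4
        rw [mul_one, ← hsplit]
        exact h4
      have h6 : 3 ^ r ∣ n2 - n1 := aux_order r (n2 - n1) h5.symm
      rcases h6 with ⟨c, hc⟩
      rcases Nat.eq_zero_or_pos c with rfl | hcpos
      · omega
      · exfalso
        have : 3 ^ r * 1 ≤ 3 ^ r * c := Nat.mul_le_mul_left _ hcpos
        omega
    intro n1 n2 h1 h2 hgeq
    rcases le_total n1 n2 with h | h
    · exact key n1 n2 h (by omega) hgeq
    · exact (key n2 n1 h (by omega) hgeq.symm).symm
  -- target value T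
  set T : ℕ := ∑ i ∈ Finset.range r, b (i + 1) * 3 ^ i with hT
  obtain ⟨hTlt, hTdig⟩ := aux_T r (fun i => b (i + 1)) (fun i hi => hb (i + 1) (by omega) (by omega))
  -- surjectivity: find n with g n = T
  have hexists : ∃ n, n < 3 ^ r ∧ g n = T := by
    have hpos : 0 < 3 ^ r := by positivity
    let G : Fin (3 ^ r) → Fin (3 ^ r) := fun n => ⟨g n.val, hglt n.val⟩
    have hGinj : Function.Injective G := by
      intro a c hac
      ext
      exact hinj a.val c.val a.isLt c.isLt (congrArg Fin.val hac)
    have hGsurj : Function.Surjective G := Finite.surjective_of_injective hGinj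
    obtain ⟨n, hn⟩ := hGsurj ⟨T, hTlt⟩
    exact ⟨n.val, n.isLt, congrArg Fin.val hn⟩
  obtain ⟨n, hnlt, hnT⟩ := hexists
  -- condition is equivalent to g n = T
  have hcond : ∀ n' : ℕ, (∀ j : ℕ, 1 ≤ j → j ≤ r →
      (Nat.digits 3 (l * 4 ^ n')).getD (m + j) 0 = b j) ↔ g n' = T := by
    intro n'
    constructor
    · intro h
      apply aux_eq r (g n') T (hglt n') hTlt
      intro i hi
      rw [hTdig i hi]
      have := h (i + 1) (by omega) (by omega)
      rw [hdigit n' (i + 1) (by omega) (by omega)] at this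
      simpa using this
    · intro h j hj1 hjr
      rw [hdigit n' j hj1 hjr, h]
      have := hTdig (j - 1) (by omega)
      rw [this]
      congr 1
      omega
  refine ⟨n, ⟨hnlt, (hcond n).mpr hnT⟩, ?_⟩
  intro n' ⟨hn'lt, hn'cond⟩
  exact hinj n' n hn'lt hnlt (((hcond n').mp hn'cond).trans hnT.symm)
end

section
/- For every positive integer M, Π_{k=1}^∞ |cos(M·π/3^k)| ≤ (1/2)^D, where D = #{j ≥ 0 : a_j(M) = 1} is the number of ternary digits of M equal to 1. -/
private lemma abs_cos_nat_pi_add (x : ℝ) (q : ℕ) :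
    |Real.cos (q * Real.pi + x)| = |Real.cos x| := by
  induction q with
  | zero => simp
  | succ n ih =>
    have h : ((n + 1 : ℕ) : ℝ) * Real.pi + x = (n * Real.pi + x) + Real.pi := by
      push_cast; ring
    rw [h, Real.cos_add_pi, abs_neg, ih]

private lemma key_digit_one (M k : ℕ) (h : M / 3 ^ k % 3 = 1) :
    |Real.cos ((M : ℝ) * Real.pi / 3 ^ (k + 1))| ≤ 1 / 2 := by
  have hp : (0 : ℕ) < 3 ^ k := Nat.pow_pos (by norm_num)
  set r := M % 3 ^ (k + 1) with hr
  have hrd : r / 3 ^ k = 1 := by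
    rw [hr, pow_succ, Nat.mod_mul_right_div_self]
    exact h
  have hle : 3 ^ k ≤ r := (Nat.one_le_div_iff hp).mp (le_of_eq hrd.symm)
  have hlt : r < 2 * 3 ^ k := by
    have : r / 3 ^ k < 2 := by omega
    exact (Nat.div_lt_iff_lt_mul hp).mp this
  have hq : M = 3 ^ (k + 1) * (M / 3 ^ (k + 1)) + r := (Nat.div_add_mod M (3 ^ (k + 1))).symm
  have h3 : (3 : ℝ) ^ (k + 1) ≠ 0 := by positivity
  have hsplit : (M : ℝ) * Real.pi / 3 ^ (k + 1)
      = (M / 3 ^ (k + 1) : ℕ) * Real.pi + (r : ℝ) * Real.pi / 3 ^ (k + 1) := by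
    have : (M : ℝ) = 3 ^ (k + 1) * (M / 3 ^ (k + 1) : ℕ) + r := by
      exact_mod_cast congrArg (Nat.cast : ℕ → ℝ) hq
    generalize ((M / 3 ^ (k + 1) : ℕ) : ℝ) = q at this ⊢
    field_simp [this]
    rw [this]
  rw [hsplit, abs_cos_nat_pi_add]
  set x := (r : ℝ) * Real.pi / 3 ^ (k + 1) with hx
  have hpi : (0 : ℝ) < Real.pi := Real.pi_pos
  have hx1 : Real.pi / 3 ≤ x := by
    rw [hx]
    rw [div_le_div_iff₀ (by norm_num) (by positivity)]
    have : ((3 : ℝ) ^ k) ≤ (r : ℝ) := by exact_mod_cast hle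
    calc Real.pi * 3 ^ (k + 1) = 3 ^ k * Real.pi * 3 := by ring
      _ ≤ (r : ℝ) * Real.pi * 3 := by nlinarith
  have hx2 : x ≤ 2 * Real.pi / 3 := by
    rw [hx]
    rw [div_le_div_iff₀ (by positivity) (by norm_num)]
    have : (r : ℝ) ≤ 2 * 3 ^ k := by exact_mod_cast le_of_lt hlt
    calc (r : ℝ) * Real.pi * 3 ≤ 2 * 3 ^ k * Real.pi * 3 := by nlinarith
      _ = 2 * Real.pi * 3 ^ (k + 1) := by ring
  have hxpi : x ≤ Real.pi := le_trans hx2 (by nlinarith)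
  have hx0 : 0 ≤ x := le_trans (by positivity) hx1
  rw [abs_le]
  constructor
  · have : Real.cos (2 * Real.pi / 3) ≤ Real.cos x :=
      Real.cos_le_cos_of_nonneg_of_le_pi hx0 (by nlinarith) hx2
    have h23 : Real.cos (2 * Real.pi / 3) = -(1 / 2) := by
      have : (2 : ℝ) * Real.pi / 3 = Real.pi - Real.pi / 3 := by ring
      rw [this, Real.cos_pi_sub, Real.cos_pi_div_three]
    linarith
  · have : Real.cos x ≤ Real.cos (Real.pi / 3) :=
      Real.cos_le_cos_of_nonneg_of_le_pi (by positivity) hxpi hx1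
    rw [Real.cos_pi_div_three] at this
    linarith

private lemma count_digits_one : ∀ (n M : ℕ), M < 3 ^ n →
    (∑ k ∈ Finset.range n, if M / 3 ^ k % 3 = 1 then 1 else 0)
      = (Nat.digits 3 M).count 1 := by
  intro n
  induction n with
  | zero =>
    intro M hM
    interval_cases M
    simp
  | succ n ih =>
    intro M hM
    rcases Nat.eq_zero_or_pos M with rfl | hpos
    · simp
    · rw [Nat.digits_def' (by norm_num) hpos, List.count_cons]
      rw [Finset.sum_range_succ']
      have hdiv : M / 3 < 3 ^ n := by
        rw [Nat.div_lt_iff_lt_mul (by norm_num)]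
        calc M < 3 ^ (n + 1) := hM
          _ = 3 ^ n * 3 := by ring
      have heq : ∀ k, M / 3 ^ (k + 1) % 3 = (M / 3) / 3 ^ k % 3 := by
        intro k
        rw [pow_succ']
        rw [Nat.div_div_eq_div_mul]
      simp only [heq, pow_zero, Nat.div_one]
      rw [ih (M / 3) hdiv]
      simp [List.count_cons]

/-- For every positive integer `M`, `∏_{k=1}^∞ |cos(M·π/3^k)| ≤ (1/2)^D`, where `D` is
the number of ternary digits of `M` equal to `1`. -/
theorem stmt10 (M : ℕ) (hM : 0 < M) :
    ∏' k : ℕ, |Real.cos ((M : ℝ) * Real.pi / 3 ^ (k + 1))| ≤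
      (1 / 2 : ℝ) ^ ((Nat.digits 3 M).count 1) := by
  set f : ℕ → ℝ := fun k => |Real.cos ((M : ℝ) * Real.pi / 3 ^ (k + 1))| with hf
  have hf0 : ∀ k, 0 ≤ f k := fun k => abs_nonneg _
  have hf1 : ∀ k, f k ≤ 1 := fun k => Real.abs_cos_le_one _
  have hanti : Antitone (fun s : Finset ℕ => ∏ k ∈ s, f k) := by
    intro s t hst
    have h1 : ∏ k ∈ t \ s, f k ≤ 1 :=
      Finset.prod_le_one (fun k _ => hf0 k) (fun k _ => hf1 k)
    have h2 : (0 : ℝ) ≤ ∏ k ∈ s, f k := Finset.prod_nonneg fun k _ => hf0 k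
    calc ∏ k ∈ t, f k = (∏ k ∈ t \ s, f k) * ∏ k ∈ s, f k :=
          (Finset.prod_sdiff hst).symm
      _ ≤ 1 * ∏ k ∈ s, f k := by nlinarith
      _ = ∏ k ∈ s, f k := one_mul _
  have hbdd : BddBelow (Set.range fun s : Finset ℕ => ∏ k ∈ s, f k) := by
    refine ⟨0, ?_⟩
    rintro x ⟨s, rfl⟩
    exact Finset.prod_nonneg fun k _ => hf0 k
  have hhp : HasProd f (⨅ s : Finset ℕ, ∏ k ∈ s, f k) :=
    tendsto_atTop_ciInf hanti hbdd
  rw [hhp.tprod_eq]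
  set n := Nat.log 3 M + 1 with hn
  have hMn : M < 3 ^ n := Nat.lt_pow_succ_log_self (by norm_num) M
  set S := (Finset.range n).filter (fun k => M / 3 ^ k % 3 = 1) with hS
  calc (⨅ s : Finset ℕ, ∏ k ∈ s, f k) ≤ ∏ k ∈ S, f k := ciInf_le hbdd S
    _ ≤ ∏ _k ∈ S, (1 / 2 : ℝ) :=
        Finset.prod_le_prod (fun k _ => hf0 k)
          (fun k hk => key_digit_one M k (Finset.mem_filter.mp hk).2)
    _ = (1 / 2 : ℝ) ^ S.card := by rw [Finset.prod_const]
    _ = (1 / 2 : ℝ) ^ ((Nat.digits 3 M).count 1) := by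
        congr 1
        rw [hS, Finset.card_filter]
        exact count_digits_one n M hMn
end

section
/- There exists a constant C > 0 such that for every N ∈ ℕ, every l ∈ ℤ \ {0}, and every sequence (γ_n)_{n≥1} of complex numbers with |γ_n| ≤ n^{−0.01} for all n, one has |Σ_{n=1}^{N} γ_n ∫ e(l·2^n·x) dμ(x)| ≤ C·N^{0.922}. -/
open MeasureTheory Real

/-- The `log 2 / log 3`-dimensional Hausdorff measure restricted to the middle third
Cantor set; it coincides with the pushforward, under `(a_k)_{k≥1} ↦ ∑ 2 a_k 3^{-k}`,
of the product over `k` of the uniform probability measure on `{0,1}`. -/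
noncomputable def cantorMeasure : Measure ℝ :=
  (μH[Real.logb 3 2]).restrict cantorSet

open Finset Set
open scoped ENNReal NNReal

lemma three_rpow_d : (3:ℝ) ^ (Real.logb 3 2) = 2 :=
  Real.rpow_logb (by norm_num) (by norm_num) (by norm_num)

lemma d_nonneg : 0 ≤ Real.logb 3 2 :=
  Real.logb_nonneg (by norm_num) (by norm_num)

/-- left endpoints of covering intervals -/
noncomputable def cpt : ∀ {n : ℕ}, (Fin n → Bool) → ℝ :=
  fun {n} w => ∑ i : Fin n, (if w i then 2 else 0) * (1/3:ℝ)^(i.val+1)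

lemma cpt_cons {n : ℕ} (b : Bool) (w : Fin n → Bool) :
    cpt (Fin.cons b w) = (if b then 2 else 0) * (1/3) + (1/3) * cpt w := by
  unfold cpt
  rw [Fin.sum_univ_succ]
  simp only [Fin.cons_zero, Fin.cons_succ]
  rw [Finset.mul_sum]
  congr 1
  · norm_num
  · apply Finset.sum_congr rfl
    intro i _
    have : ((i.succ : Fin (n+1)).val) = i.val + 1 := rfl
    rw [this]
    ring

lemma preCantorSet_subset_cover (n : ℕ) :
    preCantorSet n ⊆ ⋃ w : Fin n → Bool, Set.Icc (cpt w) (cpt w + (1/3:ℝ)^n) := by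
  induction n with
  | zero =>
    intro x hx
    refine Set.mem_iUnion.mpr ⟨Fin.elim0, ?_⟩
    simpa [cpt] using hx
  | succ n ih =>
    intro x hx
    rcases hx with ⟨y, hy, rfl⟩ | ⟨y, hy, rfl⟩
    · obtain ⟨w, hw⟩ := Set.mem_iUnion.mp (ih hy)
      refine Set.mem_iUnion.mpr ⟨Fin.cons false w, ?_⟩
      rw [cpt_cons]
      obtain ⟨h1, h2⟩ := hw
      have hif : ((if false then (2:ℝ) else 0)) = 0 := rfl
      rw [hif, pow_succ]
      constructor
      · norm_num; linarith
      · have : (1/3:ℝ)^n * (1/3) = (1/3)^n / 3 := by ring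
        rw [this]
        norm_num
        linarith
    · obtain ⟨w, hw⟩ := Set.mem_iUnion.mp (ih hy)
      refine Set.mem_iUnion.mpr ⟨Fin.cons true w, ?_⟩
      rw [cpt_cons]
      obtain ⟨h1, h2⟩ := hw
      have hif : ((if true then (2:ℝ) else 0)) = 2 := rfl
      rw [hif]
      have hp : (1/3:ℝ)^(n+1) = (1/3)^n / 3 := by rw [pow_succ]; ring
      constructor
      · show 2 * (1/3) + 1/3 * cpt w ≤ (2 + y)/3
        linarith
      · show (2 + y)/3 ≤ 2 * (1/3) + 1/3 * cpt w + (1/3:ℝ)^(n+1)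
        rw [hp]
        linarith

lemma hausdorff_cantorSet_le_one : μH[Real.logb 3 2] cantorSet ≤ 1 := by
  set d := Real.logb 3 2
  have main := MeasureTheory.Measure.hausdorffMeasure_le_liminf_sum (ι := fun n : ℕ => Fin n → Bool)
    d cantorSet (l := Filter.atTop)
    (fun n => ENNReal.ofReal ((1/3:ℝ)^n))
    (by
      have h0 : Filter.Tendsto (fun n : ℕ => (1/3:ℝ)^n) Filter.atTop (nhds 0) :=
        tendsto_pow_atTop_nhds_zero_of_lt_one (by norm_num) (by norm_num)
      have := ENNReal.tendsto_ofReal h0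
      simpa using this)
    (fun n w => Set.Icc (cpt w) (cpt w + (1/3:ℝ)^n))
    (by
      filter_upwards with n
      intro w
      rw [Real.ediam_Icc]
      simp)
    (by
      filter_upwards with n
      exact (Set.iInter_subset _ n).trans (preCantorSet_subset_cover n))
  refine main.trans ?_
  have hconst : ∀ n : ℕ, ∑ w : Fin n → Bool,
      Metric.ediam (Set.Icc (cpt w) (cpt w + (1/3:ℝ)^n)) ^ d = 1 := by
    intro n
    have hdiam : ∀ w : Fin n → Bool,
        Metric.ediam (Set.Icc (cpt w) (cpt w + (1/3:ℝ)^n)) = ENNReal.ofReal ((1/3:ℝ)^n) := by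
      intro w; rw [Real.ediam_Icc]; simp
    rw [Finset.sum_congr rfl (fun w _ => by rw [hdiam w])]
    rw [Finset.sum_const]
    have hcard : (Finset.univ : Finset (Fin n → Bool)).card = 2^n := by
      simp [Finset.card_univ]
    rw [hcard]
    have hpow : (ENNReal.ofReal ((1/3:ℝ)^n)) ^ d = ENNReal.ofReal ((1/2:ℝ)^n) := by
      rw [ENNReal.ofReal_rpow_of_pos (by positivity)]
      congr 1
      rw [← Real.rpow_natCast (1/3:ℝ) n, ← Real.rpow_natCast (1/2:ℝ) n,
        ← Real.rpow_mul (by norm_num), mul_comm, Real.rpow_mul (by norm_num)]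
      congr 1
      rw [show (1/3:ℝ) = 3⁻¹ by norm_num, Real.inv_rpow (by norm_num), three_rpow_d]
      norm_num
    rw [hpow]
    rw [show (ENNReal.ofReal ((1/2:ℝ)^n)) = (ENNReal.ofReal (1/2:ℝ))^n by
      rw [ENNReal.ofReal_pow (by norm_num)]]
    have : (ENNReal.ofReal (1/2:ℝ)) = 2⁻¹ := by
      rw [show (1/2:ℝ) = 2⁻¹ by norm_num]
      rw [ENNReal.ofReal_inv_of_pos (by norm_num)]
      simp
    rw [this, nsmul_eq_mul]
    push_cast
    rw [← mul_pow, ENNReal.mul_inv_cancel (by norm_num) (by norm_num), one_pow]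
  have heq : (fun n : ℕ => ∑ w : (Fin n → Bool),
      Metric.ediam (Set.Icc (cpt w) (cpt w + (1/3:ℝ)^n)) ^ d) = fun _ : ℕ => (1:ℝ≥0∞) :=
    funext hconst
  rw [heq]
  exact le_of_eq (Filter.liminf_const 1)

instance : IsFiniteMeasure cantorMeasure := by
  constructor
  rw [cantorMeasure, Measure.restrict_apply_univ]
  exact lt_of_le_of_lt hausdorff_cantorSet_le_one (by norm_num)


lemma preCantorSet_subset_unitInterval' {n : ℕ} : preCantorSet n ⊆ Set.Icc 0 1 := by
  induction n with
  | zero => exact subset_rfl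
  | succ n ih =>
    rintro x (⟨y, hy, rfl⟩ | ⟨y, hy, rfl⟩) <;>
      obtain ⟨h0, h1⟩ := ih hy <;> constructor <;> simp <;> linarith

lemma preCantorSet_antitone' : ∀ n : ℕ, preCantorSet (n+1) ⊆ preCantorSet n := by
  intro n
  induction n with
  | zero =>
    rintro x (⟨y, hy, rfl⟩ | ⟨y, hy, rfl⟩) <;> obtain ⟨h0, h1⟩ := hy <;>
      constructor <;> simp <;> linarith
  | succ n ih =>
    rintro x (⟨y, hy, rfl⟩ | ⟨y, hy, rfl⟩)
    · exact Or.inl ⟨y, ih hy, rfl⟩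
    · exact Or.inr ⟨y, ih hy, rfl⟩

/-- self-similarity of the Cantor set -/
lemma cantorSet_eq_union :
    cantorSet = (· / 3) '' cantorSet ∪ (fun x => (2 + x) / 3) '' cantorSet := by
  apply Set.Subset.antisymm
  · intro x hx
    have hmem : ∀ n, x ∈ preCantorSet (n+1) := fun n => Set.mem_iInter.mp hx (n+1)
    have hx01 : x ∈ Set.Icc (0:ℝ) 1 := Set.mem_iInter.mp hx 0
    rcases lt_or_ge x (2/3) with hlt | hge
    · -- x in the left part for every n
      left
      refine ⟨3 * x, ?_, by ring⟩
      apply Set.mem_iInter.mpr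
      intro n
      rcases hmem n with ⟨y, hy, hxy⟩ | ⟨y, hy, hxy⟩
      · have : y = 3 * x := by field_simp at hxy; linarith
        rwa [← this]
      · exfalso
        have hy01 := preCantorSet_subset_unitInterval' hy
        have : (2:ℝ)/3 ≤ (2 + y)/3 := by
          obtain ⟨h0, _⟩ := hy01; linarith
        rw [show (2+y)/3 = x from hxy] at this
        linarith
    · -- x in the right part for every n
      right
      refine ⟨3 * x - 2, ?_, by ring⟩
      apply Set.mem_iInter.mpr
      intro n
      rcases hmem n with ⟨y, hy, hxy⟩ | ⟨y, hy, hxy⟩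
      · exfalso
        have hy01 := preCantorSet_subset_unitInterval' hy
        have : y / 3 ≤ 1/3 := by obtain ⟨_, h1⟩ := hy01; linarith
        rw [show y/3 = x from hxy] at this
        linarith
      · have : y = 3 * x - 2 := by field_simp at hxy; linarith
        rwa [← this]
  · rintro x (⟨y, hy, rfl⟩ | ⟨y, hy, rfl⟩) <;> apply Set.mem_iInter.mpr <;> intro n
    · cases n with
      | zero =>
        have := preCantorSet_subset_unitInterval' (Set.mem_iInter.mp hy 0)
        obtain ⟨h0, h1⟩ := Set.mem_iInter.mp hy 0
        constructor <;> simp <;> linarith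
      | succ n => exact Or.inl ⟨y, Set.mem_iInter.mp hy n, rfl⟩
    · cases n with
      | zero =>
        obtain ⟨h0, h1⟩ := Set.mem_iInter.mp hy 0
        constructor <;> simp <;> linarith
      | succ n => exact Or.inr ⟨y, Set.mem_iInter.mp hy n, rfl⟩

/-- scaling of Hausdorff measure under affine contraction x ↦ x/3 + c -/
lemma hausdorff_scale (c : ℝ) (s : Set ℝ) :
    μH[Real.logb 3 2] ((fun x => x / 3 + c) '' s) = 2⁻¹ * μH[Real.logb 3 2] s := by
  set d := Real.logb 3 2 with hd
  have hd0 : 0 ≤ d := d_nonneg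
  have hlip : LipschitzWith (3⁻¹ : ℝ≥0) (fun x : ℝ => x / 3 + c) := by
    apply LipschitzWith.of_dist_le_mul
    intro x y
    rw [Real.dist_eq, Real.dist_eq,
      show x / 3 + c - (y / 3 + c) = (x - y)/3 by ring, abs_div,
      abs_of_pos (show (0:ℝ) < 3 by norm_num)]
    have hc : ((3⁻¹ : ℝ≥0) : ℝ) = 1/3 := by norm_num
    rw [hc]
    exact le_of_eq (by ring)
  have hlip' : LipschitzWith (3 : ℝ≥0) (fun y : ℝ => 3 * (y - c)) := by
    apply LipschitzWith.of_dist_le_mul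
    intro x y
    rw [Real.dist_eq, Real.dist_eq,
      show 3 * (x - c) - 3 * (y - c) = 3 * (x - y) by ring, abs_mul,
      abs_of_pos (show (0:ℝ) < 3 by norm_num)]
    have hc : ((3 : ℝ≥0) : ℝ) = 3 := by norm_num
    rw [hc]
  have hcomp : (fun y : ℝ => 3 * (y - c)) '' ((fun x : ℝ => x / 3 + c) '' s) = s := by
    rw [← Set.image_comp]
    have : (fun y : ℝ => 3 * (y - c)) ∘ (fun x : ℝ => x / 3 + c) = id := by
      funext x; simp; ring
    rw [this, Set.image_id]
  have hnn3 : (3:ℝ≥0) ^ d = 2 := by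
    apply NNReal.coe_injective
    rw [NNReal.coe_rpow]
    push_cast
    rw [three_rpow_d]
  have h3d : ((3:ℝ≥0) : ℝ≥0∞) ^ d = 2 := by
    rw [← ENNReal.coe_rpow_of_ne_zero (by norm_num), hnn3]
    rfl
  have h3d' : ((3⁻¹:ℝ≥0) : ℝ≥0∞) ^ d = 2⁻¹ := by
    rw [← ENNReal.coe_rpow_of_ne_zero (by norm_num), NNReal.inv_rpow, hnn3,
      ENNReal.coe_inv (by norm_num)]
    rfl
  have le1 : μH[d] ((fun x : ℝ => x / 3 + c) '' s) ≤ 2⁻¹ * μH[d] s := by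
    have := hlip.hausdorffMeasure_image_le hd0 s
    rwa [h3d'] at this
  have le2 : μH[d] s ≤ 2 * μH[d] ((fun x : ℝ => x / 3 + c) '' s) := by
    have := hlip'.hausdorffMeasure_image_le hd0 ((fun x : ℝ => x / 3 + c) '' s)
    rwa [hcomp, h3d] at this
  refine le_antisymm le1 ?_
  calc (2⁻¹ : ℝ≥0∞) * μH[d] s ≤ 2⁻¹ * (2 * μH[d] ((fun x : ℝ => x / 3 + c) '' s)) :=
        mul_le_mul_right le2 _
    _ = μH[d] ((fun x : ℝ => x / 3 + c) '' s) := by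
        rw [← mul_assoc, ENNReal.inv_mul_cancel (by norm_num) (by norm_num), one_mul]
lemma image_div3_subset : (· / 3 : ℝ → ℝ) '' cantorSet ⊆ Set.Icc 0 (1/3) := by
  rintro x ⟨y, hy, rfl⟩
  obtain ⟨h0, h1⟩ := cantorSet_subset_unitInterval hy
  constructor <;> simp <;> linarith

lemma image_shift_subset : (fun x : ℝ => (2 + x)/3) '' cantorSet ⊆ Set.Icc (2/3) 1 := by
  rintro x ⟨y, hy, rfl⟩
  obtain ⟨h0, h1⟩ := cantorSet_subset_unitInterval hy
  constructor <;> simp <;> linarith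

lemma meas_img0 : MeasurableSet ((· / 3 : ℝ → ℝ) '' cantorSet) :=
  (isCompact_cantorSet.image (by continuity)).isClosed.measurableSet

lemma meas_img1 : MeasurableSet ((fun x : ℝ => (2 + x)/3) '' cantorSet) :=
  (isCompact_cantorSet.image (by continuity)).isClosed.measurableSet

lemma hs0 (s : Set ℝ) :
    μH[Real.logb 3 2] ((· / 3 : ℝ → ℝ) '' s) = 2⁻¹ * μH[Real.logb 3 2] s := by
  have h := hausdorff_scale 0 s
  have : (fun x : ℝ => x / 3 + 0) = (· / 3 : ℝ → ℝ) := by funext x; ring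
  rwa [this] at h

lemma hs1 (s : Set ℝ) :
    μH[Real.logb 3 2] ((fun x : ℝ => (2 + x)/3) '' s) = 2⁻¹ * μH[Real.logb 3 2] s := by
  have h := hausdorff_scale (2/3) s
  have : (fun x : ℝ => x / 3 + 2/3) = (fun x : ℝ => (2 + x)/3) := by funext x; ring
  rwa [this] at h

lemma cantor_measure_eq :
    cantorMeasure = (2⁻¹ : ℝ≥0∞) • Measure.map (· / 3 : ℝ → ℝ) cantorMeasure
      + (2⁻¹ : ℝ≥0∞) • Measure.map (fun x : ℝ => (2 + x)/3) cantorMeasure := by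
  have hm0 : Measurable (· / 3 : ℝ → ℝ) := measurable_id.div_const 3
  have hm1 : Measurable (fun x : ℝ => (2 + x)/3) := (measurable_const.add measurable_id).div_const 3
  ext A hA
  have hrs : MeasurableSet cantorSet := isClosed_cantorSet.measurableSet
  rw [Measure.add_apply, Measure.smul_apply, Measure.smul_apply, smul_eq_mul, smul_eq_mul,
    Measure.map_apply hm0 hA, Measure.map_apply hm1 hA,
    cantorMeasure, Measure.restrict_apply hA,
    Measure.restrict_apply (hm0 hA), Measure.restrict_apply (hm1 hA)]
  have hsplit : A ∩ cantorSet
      = (A ∩ (· / 3 : ℝ → ℝ) '' cantorSet) ∪ (A ∩ (fun x : ℝ => (2 + x)/3) '' cantorSet) := by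
    rw [← Set.inter_union_distrib_left, ← cantorSet_eq_union]
  have hdisj : Disjoint (A ∩ (· / 3 : ℝ → ℝ) '' cantorSet)
      (A ∩ (fun x : ℝ => (2 + x)/3) '' cantorSet) := by
    rw [Set.disjoint_left]
    rintro x ⟨_, hx0⟩ ⟨_, hx1⟩
    have h0 := (image_div3_subset hx0).2
    have h1 := (image_shift_subset hx1).1
    linarith
  rw [hsplit, measure_union hdisj (hA.inter meas_img1)]
  congr 1
  · -- left piece
    rw [Set.inter_comm, ← Set.image_inter_preimage, hs0, Set.inter_comm]
  · rw [Set.inter_comm, ← Set.image_inter_preimage, hs1, Set.inter_comm]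



/-- 4^(3^e) = 1 + 3^(e+1) u with 3 ∤ u. -/
lemma nt1 (e : ℕ) : ∃ u : ℤ, (4:ℤ)^(3^e) = 1 + 3^(e+1)*u ∧ ¬(3:ℤ) ∣ u := by
  induction e with
  | zero => exact ⟨1, by norm_num, by norm_num⟩
  | succ e ih =>
    obtain ⟨u, hu, hu3⟩ := ih
    refine ⟨u + 3^(e+1)*u^2 + 3^(2*e+1)*u^3, ?_, ?_⟩
    · have : (4:ℤ)^(3^(e+1)) = ((4:ℤ)^(3^e))^3 := by
        rw [← pow_mul, pow_succ]
      rw [this, hu]; ring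
    · intro h
      apply hu3
      have h1 : (3:ℤ) ∣ 3^(e+1)*u^2 + 3^(2*e+1)*u^3 := by
        apply dvd_add <;> exact Dvd.dvd.mul_right (dvd_pow_self 3 (Nat.succ_ne_zero _)) _
      have h2 : (3:ℤ) ∣ u := by
        have := dvd_sub h h1
        simpa using this
      exact h2

/-- binomial: (1+a)^j = 1 + j a + a² c -/
lemma nt2 (a : ℤ) (j : ℕ) : ∃ c : ℤ, (1+a)^j = 1 + j*a + a^2*c := by
  induction j with
  | zero => exact ⟨0, by norm_num⟩
  | succ j ih =>
    obtain ⟨c, hc⟩ := ih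
    exact ⟨c + j + a*c, by rw [pow_succ, hc]; push_cast; ring⟩

/-- LTE-style: 3^(K+1) ∣ 4^m − 1 → 3^K ∣ m -/
lemma nt3 (K : ℕ) : ∀ m : ℕ, (3:ℤ)^(K+1) ∣ 4^m - 1 → (3:ℕ)^K ∣ m := by
  induction K with
  | zero => intro m _; simpa using one_dvd m
  | succ K ih =>
    intro m h
    have h' : (3:ℤ)^(K+1) ∣ 4^m - 1 := dvd_trans (pow_dvd_pow 3 (by omega)) h
    obtain ⟨m₁, hm₁⟩ := ih m h'
    obtain ⟨u, hu, hu3⟩ := nt1 K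
    obtain ⟨c, hc⟩ := nt2 (3^(K+1)*u) m₁
    have key : (4:ℤ)^m - 1 = 3^(K+1) * (m₁*u + 3^(K+1)*(u^2*c)) := by
      have : (4:ℤ)^m = ((4:ℤ)^(3^K))^m₁ := by rw [← pow_mul, ← hm₁]
      rw [this, hu, hc]; push_cast; ring
    rw [key] at h
    have h3 : (3:ℤ) ∣ m₁*u + 3^(K+1)*(u^2*c) := by
      have hpow : ((3:ℤ)^(K+1+1)) = 3^(K+1) * 3 := by ring
      rw [hpow] at h
      exact (mul_dvd_mul_iff_left (a := (3:ℤ)^(K+1)) (by positivity)).mp h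
    have h4 : (3:ℤ) ∣ m₁*u := by
      have : (3:ℤ) ∣ 3^(K+1)*(u^2*c) := Dvd.dvd.mul_right (dvd_pow_self 3 (Nat.succ_ne_zero _)) _
      simpa using dvd_sub h3 this
    have h5 : (3:ℤ) ∣ (m₁:ℤ) := by
      rcases (Int.prime_three.dvd_mul.mp h4) with h | h
      · exact h
      · exact absurd h hu3
    have h6 : (3:ℕ) ∣ m₁ := by exact_mod_cast h5
    obtain ⟨m₂, hm₂⟩ := h6
    exact ⟨m₂, by rw [hm₁, hm₂]; ring⟩

/-- 3^(K+2) does not divide 2^δ − 1 for 0 < δ ≤ 3^K. -/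
lemma nt4 (K δ : ℕ) (hδ : 0 < δ) (hδK : δ ≤ 3^K) : ¬ ((3:ℕ)^(K+2) ∣ 2^δ - 1) := by
  intro h
  have hz : (3:ℤ)^(K+2) ∣ (2:ℤ)^δ - 1 := by
    have h1 : (1:ℕ) ≤ 2^δ := Nat.one_le_two_pow
    have := Int.natCast_dvd_natCast.mpr h
    push_cast [h1] at this
    exact_mod_cast this
  rcases Nat.even_or_odd δ with he | ho
  · obtain ⟨m, hm⟩ := he
    have hm' : δ = 2*m := by omega
    have h4 : (3:ℤ)^(K+2) ∣ (4:ℤ)^m - 1 := by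
      have : (2:ℤ)^δ = 4^m := by rw [hm']; rw [pow_mul]; norm_num
      rwa [this] at hz
    have := nt3 (K+1) m (by exact_mod_cast h4)
    have hle : 3^(K+1) ≤ m := Nat.le_of_dvd (by omega) this
    have : 3^K < 3^(K+1) := Nat.pow_lt_pow_succ (by norm_num)
    omega
  · -- δ odd: 3 ∤ 2^δ − 1
    have h3 : (3:ℤ) ∣ (2:ℤ)^δ - 1 := dvd_trans (dvd_pow_self 3 (by omega)) hz
    have : ((2:ℤ)^δ - 1 : ZMod 3) = 0 := by
      exact_mod_cast (ZMod.intCast_zmod_eq_zero_iff_dvd _ 3).mpr h3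
    push_cast at this
    rw [show ((2:ZMod 3)) = -1 by decide, Odd.neg_one_pow ho] at this
    exact absurd this (by decide)

/-- injectivity of n ↦ q·2^n mod 3^(K+2) on [1,N], N ≤ 3^K -/
lemma nt5 {q K N : ℕ} (hq0 : q ≠ 0) (hq3 : ¬ 3 ∣ q) (hN : N ≤ 3^K) :
    Set.InjOn (fun n => q * 2^n % 3^(K+2)) (Finset.Icc 1 N) := by
  have main : ∀ n₁ n₂, n₁ ∈ Finset.Icc 1 N → n₂ ∈ Finset.Icc 1 N → n₁ ≤ n₂ →
      q * 2^n₁ % 3^(K+2) = q * 2^n₂ % 3^(K+2) → n₁ = n₂ := by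
    intro n₁ n₂ h₁ h₂ hle h
    by_contra hne
    have hlt : n₁ < n₂ := lt_of_le_of_ne hle hne
    set δ := n₂ - n₁ with hδ
    have hδ0 : 0 < δ := by omega
    have hmod : q * 2^n₁ ≡ q * 2^n₁ * 2^δ [MOD 3^(K+2)] := by
      have : q * 2^n₂ = q * 2^n₁ * 2^δ := by
        rw [mul_assoc, ← pow_add]; congr 2; omega
      rw [← this]; exact h
    have hcop : Nat.Coprime (q * 2^n₁) (3^(K+2)) := by
      apply Nat.Coprime.pow_right
      rw [Nat.coprime_mul_iff_left]
      constructor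
      · exact (Nat.coprime_comm.mp ((Nat.Prime.coprime_iff_not_dvd (by norm_num)).mpr hq3))
      · exact Nat.Coprime.pow_left _ (by norm_num)
    have hmod2 : 1 ≡ 2^δ [MOD 3^(K+2)] := by
      have hg : Nat.gcd (3^(K+2)) (q * 2^n₁) = 1 := (Nat.coprime_comm.mp hcop)
      exact Nat.ModEq.cancel_left_of_coprime hg (by simpa [mul_one] using hmod)
    have hdvd : 3^(K+2) ∣ 2^δ - 1 := (Nat.modEq_iff_dvd' Nat.one_le_two_pow).mp hmod2
    exact nt4 K δ hδ0 (by simp at h₁ h₂; omega) hdvd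
  intro n₁ hn₁ n₂ hn₂ h
  simp only [Finset.coe_Icc, Set.mem_Icc] at hn₁ hn₂
  rcases le_total n₁ n₂ with hle | hle
  · exact main n₁ n₂ (by simp [hn₁]) (by simp [hn₂]) hle h
  · exact (main n₂ n₁ (by simp [hn₂]) (by simp [hn₁]) hle h.symm).symm



/-- sum of three cosines at angles 2π/3 apart vanishes -/
lemma trig0 (θ : ℝ) :
    Real.cos θ + Real.cos (θ + 2*π/3) + Real.cos (θ + 2*π/3 + 2*π/3) = 0 := by
  have hc1 : Real.cos (2*π/3) = -(1/2) := by
    have : (2*π/3 : ℝ) = π - π/3 := by ring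
    rw [this, Real.cos_pi_sub, Real.cos_pi_div_three]
  have hs1 : Real.sin (2*π/3) = Real.sqrt 3 / 2 := by
    have : (2*π/3 : ℝ) = π - π/3 := by ring
    rw [this, Real.sin_pi_sub, Real.sin_pi_div_three]
  have h2 : (θ + 2*π/3 + 2*π/3 : ℝ) = (θ + 2*π/3) + 2*π/3 := by ring
  rw [Real.cos_add θ (2*π/3), h2, Real.cos_add (θ + 2*π/3) (2*π/3),
    Real.cos_add θ (2*π/3), Real.sin_add θ (2*π/3), hc1, hs1]
  have h3 : Real.sqrt 3 ^ 2 = 3 := Real.sq_sqrt (by norm_num)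
  ring_nf
  linear_combination (-(1/4) * Real.cos θ) * h3

/-- key pointwise bound -/
lemma trig1 (θ : ℝ) :
    |Real.cos θ| + |Real.cos (θ + 2*π/3)| + |Real.cos (θ + 2*π/3 + 2*π/3)| ≤ 2 := by
  have h0 := trig0 θ
  have b1 := Real.neg_one_le_cos θ
  have b2 := Real.neg_one_le_cos (θ + 2*π/3)
  have b3 := Real.neg_one_le_cos (θ + 2*π/3 + 2*π/3)
  have c1 := Real.cos_le_one θ
  have c2 := Real.cos_le_one (θ + 2*π/3)
  have c3 := Real.cos_le_one (θ + 2*π/3 + 2*π/3)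
  rcases abs_cases (Real.cos θ) with ⟨e1, _⟩ | ⟨e1, _⟩ <;>
    rcases abs_cases (Real.cos (θ + 2*π/3)) with ⟨e2, _⟩ | ⟨e2, _⟩ <;>
      rcases abs_cases (Real.cos (θ + 2*π/3 + 2*π/3)) with ⟨e3, _⟩ | ⟨e3, _⟩ <;>
        rw [e1, e2, e3] <;> linarith


noncomputable def cosProd (K : ℕ) (t : ℝ) : ℝ :=
  ∏ k ∈ Finset.range K, |Real.cos (2*π*t / 3^(k+1))|

lemma cosProd_nonneg (K : ℕ) (t : ℝ) : 0 ≤ cosProd K t :=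
  Finset.prod_nonneg (fun _ _ => abs_nonneg _)

lemma cosProd_le_one (K : ℕ) (t : ℝ) : cosProd K t ≤ 1 :=
  Finset.prod_le_one (fun _ _ => abs_nonneg _) (fun _ _ => Real.abs_cos_le_one _)

/-- shifting the argument by an integer multiple of 3^K does not change cosProd K -/
lemma cosProd_period (K : ℕ) (a : ℕ) (j : ℤ) :
    cosProd K ((a : ℝ) + (j : ℝ) * 3^K) = cosProd K a := by
  unfold cosProd
  apply Finset.prod_congr rfl
  intro k hk
  have hk' : k + 1 ≤ K := by simpa using Finset.mem_range.mp hk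
  congr 1
  have h3 : ((3:ℝ)^(k+1)) ≠ 0 := by positivity
  have : 2*π*((a:ℝ) + (j:ℝ) * 3^K) / 3^(k+1)
      = 2*π*(a:ℝ)/3^(k+1) + ((j * 3^(K-(k+1)) : ℤ) : ℝ) * (2*π) := by
    push_cast
    rw [show (3:ℝ)^(K-(k+1)) = 3^K / 3^(k+1) by
      rw [eq_div_iff h3, ← pow_add]; congr 1; omega]
    field_simp
  rw [this, Real.cos_add_int_mul_two_pi]

lemma cosProd_period_nat (K a j : ℕ) :
    cosProd K ((a : ℝ) + (j : ℝ) * 3^K) = cosProd K (a : ℝ) := by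
  have := cosProd_period K a (j : ℤ)
  push_cast at this
  exact this

lemma w_mod (K : ℕ) (a : ℕ) : cosProd K ((a % 3^K : ℕ) : ℝ) = cosProd K (a : ℝ) := by
  have hn : (a : ℝ) = ((a % 3^K : ℕ) : ℝ) + ((a / 3^K : ℕ) : ℝ) * ((3^K : ℕ) : ℝ) := by
    rw [← Nat.cast_mul, ← Nat.cast_add]
    exact_mod_cast (Nat.mod_add_div' a (3^K)).symm
  rw [show ((3^K : ℕ) : ℝ) = (3:ℝ)^K by push_cast; ring] at hn
  rw [hn]
  exact (cosProd_period_nat K (a % 3^K) (a / 3^K)).symm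

/-- total sum bound -/
lemma wsum (K : ℕ) :
    ∑ a ∈ Finset.range (3^K), cosProd K (a : ℝ) ≤ 2^K := by
  induction K with
  | zero => simp [cosProd]
  | succ K ih =>
    have key : ∑ a ∈ Finset.range (3^(K+1)), cosProd (K+1) (a : ℝ)
        ≤ 2 * ∑ a ∈ Finset.range (3^K), cosProd K (a : ℝ) := by
      have hre : ∑ a ∈ Finset.range (3^(K+1)), cosProd (K+1) (a : ℝ)
          = ∑ p ∈ Finset.range (3^K) ×ˢ Finset.range 3,
              cosProd (K+1) ((p.1 + 3^K * p.2 : ℕ) : ℝ) := by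
        apply Finset.sum_nbij' (i := fun a => (a % 3^K, a / 3^K))
          (j := fun p => p.1 + 3^K * p.2)
        · intro a ha
          simp only [Finset.mem_product, Finset.mem_range] at *
          constructor
          · exact Nat.mod_lt _ (by positivity)
          · have : 3^(K+1) = 3^K * 3 := by ring
            rw [this] at ha
            exact Nat.div_lt_of_lt_mul (by omega)
        · intro p hp
          simp only [Finset.mem_product, Finset.mem_range] at *
          have : 3^(K+1) = 3^K * 3 := by ring
          rw [this]
          calc p.1 + 3^K * p.2 < 3^K + 3^K * p.2 := by omega
            _ ≤ 3^K * 3 := by nlinarith [hp.1, hp.2, Nat.one_le_two_pow (n := K)]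
        · intro a ha
          show a % 3^K + 3^K * (a / 3^K) = a
          rw [mul_comm]
          exact Nat.mod_add_div' a (3^K)
        · intro p hp
          simp only [Finset.mem_product, Finset.mem_range] at hp
          have h1 : (p.1 + 3^K * p.2) % 3^K = p.1 := by
            rw [Nat.add_mul_mod_self_left]
            exact Nat.mod_eq_of_lt hp.1
          have h2 : (p.1 + 3^K * p.2) / 3^K = p.2 := by
            rw [Nat.add_mul_div_left _ _ (by positivity), Nat.div_eq_of_lt hp.1, zero_add]
          simp [h1, h2]
        · intro a ha
          congr 2
          rw [mul_comm]
          exact (Nat.mod_add_div' a (3^K)).symm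
      rw [hre, Finset.sum_product]
      have step : ∀ c ∈ Finset.range (3^K),
          ∑ e ∈ Finset.range 3, cosProd (K+1) ((c + 3^K * e : ℕ) : ℝ)
          ≤ cosProd K (c : ℝ) * 2 := by
        intro c _
        have expand : ∀ e : ℕ, cosProd (K+1) ((c + 3^K * e : ℕ) : ℝ)
            = cosProd K (c:ℝ) * |Real.cos (2*π*c/3^(K+1) + (e:ℝ) * (2*π/3))| := by
          intro e
          have hsplit : cosProd (K+1) ((c + 3^K * e : ℕ) : ℝ)
              = cosProd K ((c + 3^K * e : ℕ) : ℝ)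
                * |Real.cos (2*π*((c + 3^K*e : ℕ):ℝ)/3^(K+1))| :=
            Finset.prod_range_succ _ _
          have hper : cosProd K ((c + 3^K * e : ℕ) : ℝ) = cosProd K (c:ℝ) := by
            rw [show ((c + 3^K * e : ℕ) : ℝ) = (c:ℝ) + (((e:ℤ)):ℝ) * 3^K by push_cast; ring]
            exact cosProd_period K c (e:ℤ)
          rw [hsplit, hper]
          congr 2
          push_cast
          have h3 : ((3:ℝ)^(K+1)) ≠ 0 := by positivity
          field_simp
          ring
        rw [Finset.sum_congr rfl (fun e _ => expand e)]
        rw [← Finset.mul_sum]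
        apply mul_le_mul_of_nonneg_left _ (cosProd_nonneg _ _)
        have h3 : ∑ e ∈ Finset.range 3, |Real.cos (2*π*c/3^(K+1) + (e:ℝ)*(2*π/3))|
            = |Real.cos (2*π*c/3^(K+1))| + |Real.cos (2*π*c/3^(K+1) + 2*π/3)|
              + |Real.cos (2*π*c/3^(K+1) + 2*π/3 + 2*π/3)| := by
          rw [Finset.sum_range_succ, Finset.sum_range_succ, Finset.sum_range_succ,
            Finset.sum_range_zero]
          push_cast
          ring_nf
        rw [h3]
        exact trig1 _
      calc ∑ c ∈ Finset.range (3^K), ∑ e ∈ Finset.range 3,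
              cosProd (K+1) ((c + 3^K * e : ℕ) : ℝ)
          ≤ ∑ c ∈ Finset.range (3^K), cosProd K (c:ℝ) * 2 :=
            Finset.sum_le_sum step
        _ = 2 * ∑ c ∈ Finset.range (3^K), cosProd K (c:ℝ) := by
            rw [← Finset.sum_mul]; ring
    calc ∑ a ∈ Finset.range (3^(K+1)), cosProd (K+1) (a : ℝ)
        ≤ 2 * ∑ a ∈ Finset.range (3^K), cosProd K (a : ℝ) := key
      _ ≤ 2 * 2^K := by linarith
      _ = 2^(K+1) := by ring

/-- main counting bound -/
lemma main_count {q K N : ℕ} (hq0 : q ≠ 0) (hq3 : ¬ 3 ∣ q) (hN : N ≤ 3^K) :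
    ∑ n ∈ Finset.Icc 1 N, cosProd (K+2) ((q * 2^n : ℕ) : ℝ) ≤ 2^(K+2) := by
  have h1 : ∀ n, cosProd (K+2) ((q * 2^n : ℕ) : ℝ)
      = cosProd (K+2) (((q * 2^n) % 3^(K+2) : ℕ) : ℝ) := fun n => (w_mod _ _).symm
  rw [Finset.sum_congr rfl (fun n _ => h1 n)]
  have hinj := nt5 hq0 hq3 hN (K := K)
  have himg : ∑ a ∈ (Finset.Icc 1 N).image (fun n => q * 2^n % 3^(K+2)), cosProd (K+2) (a:ℝ)
      = ∑ n ∈ Finset.Icc 1 N, cosProd (K+2) (((fun n => q * 2^n % 3^(K+2)) n : ℕ) : ℝ) :=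
    Finset.sum_image (fun x hx y hy h => hinj (by simpa using hx) (by simpa using hy) h)
  simp only at himg
  rw [← himg]
  calc ∑ a ∈ (Finset.Icc 1 N).image (fun n => q * 2^n % 3^(K+2)), cosProd (K+2) (a:ℝ)
      ≤ ∑ a ∈ Finset.range (3^(K+2)), cosProd (K+2) (a:ℝ) := by
        apply Finset.sum_le_sum_of_subset_of_nonneg
        · intro a ha
          simp only [Finset.mem_image] at ha
          obtain ⟨n, _, rfl⟩ := ha
          exact Finset.mem_range.mpr (Nat.mod_lt _ (by positivity))
        · intro a _ _; exact cosProd_nonneg _ _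
    _ ≤ 2^(K+2) := wsum (K+2)

noncomputable def E (t x : ℝ) : ℂ := Complex.exp (2 * (π:ℂ) * Complex.I * ((t:ℂ) * (x:ℂ)))

noncomputable def FC (t : ℝ) : ℂ := ∫ x : ℝ, E t x ∂cantorMeasure

lemma abs_E (t x : ℝ) : ‖E t x‖ = 1 := by
  unfold E
  rw [Complex.norm_exp]
  have : (2 * (π:ℂ) * Complex.I * ((t:ℂ) * (x:ℂ))).re = 0 := by
    simp [Complex.mul_re, Complex.mul_im]
  rw [this, Real.exp_zero]

lemma cont_E (t : ℝ) : Continuous fun x : ℝ => E t x := by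
  unfold E
  continuity

lemma integrable_E (t : ℝ) (ν : Measure ℝ) [IsFiniteMeasure ν] :
    Integrable (fun x : ℝ => E t x) ν := by
  apply MeasureTheory.Integrable.mono' (integrable_const (1:ℝ))
    (cont_E t).aestronglyMeasurable
  filter_upwards with x
  rw [show ‖E t x‖ = ‖E t x‖ from rfl, abs_E]

noncomputable def Mmass : ℝ := (cantorMeasure Set.univ).toReal

lemma Mmass_nonneg : 0 ≤ Mmass := ENNReal.toReal_nonneg

lemma abs_FC_le (t : ℝ) : ‖FC t‖ ≤ Mmass := by
  unfold FC
  refine (norm_integral_le_integral_norm _).trans ?_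
  have : ∀ x : ℝ, ‖E t x‖ = (1:ℝ) := fun x => by
    rw [show ‖E t x‖ = ‖E t x‖ from rfl, abs_E]
  rw [integral_congr_ae (ae_of_all _ this), integral_const, smul_eq_mul, mul_one]
  exact le_rfl

lemma FC_eq (t : ℝ) :
    FC t = (2⁻¹ : ℂ) * ((1 + Complex.exp (2 * (π:ℂ) * Complex.I * ((2*t/3 : ℝ):ℂ))) * FC (t/3)) := by
  have hm0 : Measurable (· / 3 : ℝ → ℝ) := measurable_id.div_const 3
  have hm1 : Measurable (fun x : ℝ => (2 + x)/3) := (measurable_const.add measurable_id).div_const 3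
  haveI hf0 : IsFiniteMeasure (Measure.map (· / 3 : ℝ → ℝ) cantorMeasure) := by
    constructor
    rw [Measure.map_apply hm0 MeasurableSet.univ]
    simp only [Set.preimage_univ]
    exact measure_lt_top _ _
  haveI hf1 : IsFiniteMeasure (Measure.map (fun x : ℝ => (2 + x)/3) cantorMeasure) := by
    constructor
    rw [Measure.map_apply hm1 MeasurableSet.univ]
    simp only [Set.preimage_univ]
    exact measure_lt_top _ _
  have step1 : FC t
      = (2⁻¹:ℝ≥0∞).toReal • ∫ x, E t x ∂(Measure.map (· / 3 : ℝ → ℝ) cantorMeasure)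
      + (2⁻¹:ℝ≥0∞).toReal • ∫ x, E t x ∂(Measure.map (fun x : ℝ => (2 + x)/3) cantorMeasure) := by
    rw [FC, show (∫ x : ℝ, E t x ∂cantorMeasure)
        = ∫ x : ℝ, E t x ∂((2⁻¹ : ℝ≥0∞) • Measure.map (· / 3 : ℝ → ℝ) cantorMeasure
          + (2⁻¹ : ℝ≥0∞) • Measure.map (fun x : ℝ => (2 + x)/3) cantorMeasure) from by
      rw [← cantor_measure_eq]]
    rw [integral_add_measure
      ((integrable_E t _).smul_measure (by norm_num))
      ((integrable_E t _).smul_measure (by norm_num))]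
    rw [integral_smul_measure, integral_smul_measure]
  have hmap0 : ∫ x, E t x ∂(Measure.map (· / 3 : ℝ → ℝ) cantorMeasure)
      = ∫ y, E t (y/3) ∂cantorMeasure :=
    integral_map hm0.aemeasurable (cont_E t).aestronglyMeasurable
  have hmap1 : ∫ x, E t x ∂(Measure.map (fun x : ℝ => (2 + x)/3) cantorMeasure)
      = ∫ y, E t ((2+y)/3) ∂cantorMeasure :=
    integral_map hm1.aemeasurable (cont_E t).aestronglyMeasurable
  have hE0 : ∀ y : ℝ, E t (y/3) = E (t/3) y := by
    intro y
    unfold E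
    congr 1
    push_cast
    ring
  have hE1 : ∀ y : ℝ, E t ((2+y)/3)
      = Complex.exp (2 * (π:ℂ) * Complex.I * ((2*t/3 : ℝ):ℂ)) * E (t/3) y := by
    intro y
    unfold E
    rw [← Complex.exp_add]
    congr 1
    push_cast
    ring
  rw [step1, hmap0, hmap1]
  rw [integral_congr_ae (ae_of_all _ hE0), integral_congr_ae (ae_of_all _ hE1)]
  rw [integral_const_mul]
  have htor : (2⁻¹:ℝ≥0∞).toReal = (2⁻¹:ℝ) := by
    rw [ENNReal.toReal_inv]
    norm_num
  rw [htor]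
  show (2⁻¹:ℝ) • FC (t/3) + (2⁻¹:ℝ) • (_ * FC (t/3)) = _
  rw [Complex.real_smul, Complex.real_smul]
  push_cast
  ring

lemma abs_FC_step (t : ℝ) :
    ‖FC t‖ = |Real.cos (2*π*t/3)| * ‖FC (t/3)‖ := by
  rw [FC_eq t]
  have hkey : (1:ℂ) + Complex.exp (2 * (π:ℂ) * Complex.I * ((2*t/3 : ℝ):ℂ))
      = Complex.exp (((2*π*t/3 : ℝ):ℂ) * Complex.I)
        * (2 * Complex.cos ((2*π*t/3 : ℝ):ℂ)) := by
    rw [Complex.two_cos, mul_add, ← Complex.exp_add, ← Complex.exp_add]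
    rw [show ((2*π*t/3 : ℝ):ℂ) * Complex.I + ((2*π*t/3 : ℝ):ℂ) * Complex.I
        = 2 * (π:ℂ) * Complex.I * ((2*t/3 : ℝ):ℂ) by push_cast; ring]
    rw [show ((2*π*t/3 : ℝ):ℂ) * Complex.I + -((2*π*t/3 : ℝ):ℂ) * Complex.I = 0 by ring]
    rw [Complex.exp_zero]
    ring
  rw [hkey]
  rw [norm_mul, norm_mul, norm_mul, norm_mul]
  rw [Complex.norm_exp]
  have hre : (((2*π*t/3 : ℝ):ℂ) * Complex.I).re = 0 := by simp
  rw [hre, Real.exp_zero]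
  rw [← Complex.ofReal_cos, Complex.norm_real, Real.norm_eq_abs]
  have h1 : ‖(2⁻¹:ℂ)‖ = 2⁻¹ := by simp
  have h2 : ‖(2:ℂ)‖ = 2 := by simp
  rw [h1, h2]
  ring

lemma abs_FC_prod (K : ℕ) : ∀ t : ℝ, ‖FC t‖ ≤ Mmass * cosProd K t := by
  induction K with
  | zero =>
    intro t
    simpa [cosProd] using abs_FC_le t
  | succ K ih =>
    intro t
    have hstep := abs_FC_step t
    have hprod : cosProd (K+1) t = |Real.cos (2*π*t/3)| * cosProd K (t/3) := by
      unfold cosProd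
      rw [Finset.prod_range_succ']
      rw [mul_comm]
      congr 1
      · norm_num
      · apply Finset.prod_congr rfl
        intro k _
        congr 2
        rw [pow_succ]
        ring
    rw [hstep, hprod]
    calc |Real.cos (2*π*t/3)| * ‖FC (t/3)‖
        ≤ |Real.cos (2*π*t/3)| * (Mmass * cosProd K (t/3)) :=
          mul_le_mul_of_nonneg_left (ih (t/3)) (abs_nonneg _)
      _ = Mmass * (|Real.cos (2*π*t/3)| * cosProd K (t/3)) := by ring


lemma val_split (v q : ℕ) (l : ℤ) (hl : l.natAbs = 3^v * q) (n J : ℕ) :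
    cosProd (v + J) ((l:ℝ)*2^n) = cosProd J ((q*2^n : ℕ) : ℝ) := by
  unfold cosProd
  rw [Finset.prod_range_add]
  have habs := Int.natAbs_eq l
  have h1 : ∀ k ∈ Finset.range v, |Real.cos (2*π*((l:ℝ)*2^n) / 3^(k+1))| = 1 := by
    intro k hk
    have hkv : k + 1 ≤ v := by simpa using Finset.mem_range.mp hk
    have hdvd : (3:ℤ)^(k+1) ∣ l := by
      have hnat : 3^(k+1) ∣ l.natAbs := by
        refine ⟨3^(v-(k+1)) * q, ?_⟩
        rw [hl, ← mul_assoc, ← pow_add]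
        congr 2
        omega
      rcases habs with h | h
      · rw [h]; exact_mod_cast Int.natCast_dvd_natCast.mpr hnat
      · rw [h]; exact Dvd.dvd.neg_right (by exact_mod_cast Int.natCast_dvd_natCast.mpr hnat)
    obtain ⟨e, he⟩ := hdvd
    have harg : 2*π*((l:ℝ)*2^n) / 3^(k+1) = ((e * 2^n : ℤ):ℝ) * (2*π) := by
      have h3 : ((3:ℝ)^(k+1)) ≠ 0 := by positivity
      rw [he]
      push_cast
      field_simp
    rw [harg, Real.cos_int_mul_two_pi]
    norm_num
  rw [Finset.prod_congr rfl h1, Finset.prod_const_one, one_mul]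
  apply Finset.prod_congr rfl
  intro j _
  rcases habs with h | h
  · have harg : 2*π*((l:ℝ)*2^n) / 3^(v+j+1) = 2*π*((q*2^n : ℕ):ℝ) / 3^(j+1) := by
      have h3 : ((3:ℝ)^(j+1)) ≠ 0 := by positivity
      have h3v : ((3:ℝ)^v) ≠ 0 := by positivity
      rw [h, hl]
      push_cast
      rw [show (3:ℝ)^(v+j+1) = 3^v * 3^(j+1) by rw [← pow_add]; norm_num [Nat.add_assoc]]
      field_simp
    rw [harg]
  · have harg : 2*π*((l:ℝ)*2^n) / 3^(v+j+1) = -(2*π*((q*2^n : ℕ):ℝ) / 3^(j+1)) := by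
      have h3 : ((3:ℝ)^(j+1)) ≠ 0 := by positivity
      have h3v : ((3:ℝ)^v) ≠ 0 := by positivity
      rw [h, hl]
      push_cast
      rw [show (3:ℝ)^(v+j+1) = 3^v * 3^(j+1) by rw [← pow_add]; norm_num [Nat.add_assoc]]
      field_simp
    rw [harg, Real.cos_neg]

lemma d_le : Real.logb 3 2 ≤ 0.922 := by
  have hlog2 : Real.log 2 < 0.6931471808 := Real.log_two_lt_d9
  have hlog3 : 1 ≤ Real.log 3 := by
    rw [Real.le_log_iff_exp_le (by norm_num)]
    exact (Real.exp_one_lt_d9).le.trans (by norm_num)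
  rw [Real.logb, div_le_iff₀ (by linarith)]
  nlinarith

lemma clog_nat_bound {N : ℕ} (hN : 1 ≤ N) : 3^(Nat.clog 3 N) ≤ 3 * N := by
  rcases Nat.eq_zero_or_pos (Nat.clog 3 N) with h0 | hpos
  · rw [h0]; omega
  · have hN2 : 1 < N := by
      by_contra hc
      have hN1' : N = 1 := by omega
      rw [hN1', Nat.clog_one_right] at hpos
      omega
    have hlt : 3^(Nat.clog 3 N - 1) < N := Nat.pow_pred_clog_lt_self (by norm_num) hN2
    have heq : 3^(Nat.clog 3 N) = 3 * 3^(Nat.clog 3 N - 1) := by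
      rw [← pow_succ']
      congr 1
      omega
    rw [heq]
    omega

lemma clog_bound {N : ℕ} (hN : 1 ≤ N) :
    (2:ℝ)^(Nat.clog 3 N + 2) ≤ 8 * (N:ℝ)^(0.922:ℝ) := by
  have hN1 : (1:ℝ) ≤ (N:ℝ) := by exact_mod_cast hN
  have hNd : (N:ℝ)^(Real.logb 3 2) ≤ (N:ℝ)^(0.922:ℝ) :=
    Real.rpow_le_rpow_of_exponent_le hN1 d_le
  have hNd0 : (0:ℝ) ≤ (N:ℝ)^(Real.logb 3 2) := Real.rpow_nonneg (by positivity) _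
  have h3K : ((3:ℝ))^(Nat.clog 3 N) ≤ 3 * (N:ℝ) := by
    calc ((3:ℝ))^(Nat.clog 3 N) = ((3^(Nat.clog 3 N) : ℕ) : ℝ) := by push_cast; ring
      _ ≤ ((3 * N : ℕ) : ℝ) := by exact_mod_cast clog_nat_bound hN
      _ = 3 * (N:ℝ) := by push_cast; ring
  have h2K : (2:ℝ)^(Nat.clog 3 N) = ((3:ℝ)^(Nat.clog 3 N))^(Real.logb 3 2) := by
    have hr : ((3:ℝ)^(Nat.clog 3 N))^(Real.logb 3 2)
        = ((3:ℝ)^(Real.logb 3 2))^(Nat.clog 3 N) := by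
      rw [← Real.rpow_natCast (3:ℝ) (Nat.clog 3 N), ← Real.rpow_mul (by norm_num), mul_comm,
        Real.rpow_mul (by norm_num), Real.rpow_natCast]
    rw [hr, three_rpow_d]
  have key : (2:ℝ)^(Nat.clog 3 N) ≤ 2 * (N:ℝ)^(Real.logb 3 2) := by
    rw [h2K]
    calc ((3:ℝ)^(Nat.clog 3 N))^(Real.logb 3 2) ≤ (3*(N:ℝ))^(Real.logb 3 2) :=
          Real.rpow_le_rpow (by positivity) h3K d_nonneg
      _ = (3:ℝ)^(Real.logb 3 2) * (N:ℝ)^(Real.logb 3 2) :=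
          Real.mul_rpow (by norm_num) (by positivity)
      _ = 2 * (N:ℝ)^(Real.logb 3 2) := by rw [three_rpow_d]
  calc (2:ℝ)^(Nat.clog 3 N + 2) = 4 * (2:ℝ)^(Nat.clog 3 N) := by ring
    _ ≤ 4 * (2 * (N:ℝ)^(Real.logb 3 2)) := by linarith [key]
    _ = 8 * (N:ℝ)^(Real.logb 3 2) := by ring
    _ ≤ 8 * (N:ℝ)^(0.922:ℝ) := by linarith


/-- There is `C > 0` such that for every `N`, every nonzero `l ∈ ℤ`, and every sequence
`(γ_n)` with `|γ_n| ≤ n^{-0.01}`, `|∑_{n=1}^N γ_n ∫ e(l·2ⁿ·x) dμ| ≤ C·N^{0.922}`. -/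
theorem stmt14 :
    ∃ C > (0 : ℝ), ∀ N : ℕ, ∀ l : ℤ, l ≠ 0 → ∀ γ : ℕ → ℂ,
      (∀ n : ℕ, 1 ≤ n → ‖γ n‖ ≤ (n : ℝ) ^ (-0.01 : ℝ)) →
      ‖∑ n ∈ Finset.Icc 1 N,
          γ n * ∫ x : ℝ,
            Complex.exp (2 * Real.pi * Complex.I * ((l : ℂ) * 2 ^ n * (x : ℂ)))
              ∂cantorMeasure‖
        ≤ C * (N : ℝ) ^ (0.922 : ℝ) := by

  refine ⟨8 * Mmass + 1, by linarith [Mmass_nonneg], ?_⟩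
  intro N l hl γ hγ
  by_cases hN0 : N = 0
  · subst hN0
    simp [Real.zero_rpow (by norm_num : (0.922:ℝ) ≠ 0)]
  have hN1 : 1 ≤ N := by omega
  obtain ⟨v, q, hq3, hfact⟩ := Nat.exists_eq_pow_mul_and_not_dvd
    (Int.natAbs_ne_zero.mpr hl) 3 (by norm_num)
  have hq0 : q ≠ 0 := by
    intro h
    rw [h, mul_zero] at hfact
    exact (Int.natAbs_ne_zero.mpr hl) hfact
  set K := Nat.clog 3 N with hK
  have hNK : N ≤ 3^K := Nat.le_pow_clog (by norm_num) N
  have hpoint : ∀ n ∈ Finset.Icc 1 N,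
      ‖γ n * ∫ x : ℝ,
        Complex.exp (2 * Real.pi * Complex.I * ((l : ℂ) * 2 ^ n * (x : ℂ))) ∂cantorMeasure‖
      ≤ Mmass * cosProd (K+2) ((q*2^n : ℕ) : ℝ) := by
    intro n hn
    have hn1 : 1 ≤ n := (Finset.mem_Icc.mp hn).1
    have hint : (∫ x : ℝ,
        Complex.exp (2 * Real.pi * Complex.I * ((l : ℂ) * 2 ^ n * (x : ℂ))) ∂cantorMeasure)
        = FC ((l:ℝ)*2^n) := by
      unfold FC E
      apply integral_congr_ae
      filter_upwards with x
      congr 1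
      push_cast
      ring
    rw [norm_mul, hint]
    have hγ1 : ‖γ n‖ ≤ 1 := by
      refine (hγ n hn1).trans ?_
      apply Real.rpow_le_one_of_one_le_of_nonpos
      · exact_mod_cast hn1
      · norm_num
    have hFC : ‖FC ((l:ℝ)*2^n)‖ ≤ Mmass * cosProd (K+2) ((q*2^n : ℕ) : ℝ) := by
      have := abs_FC_prod (v + (K+2)) ((l:ℝ)*2^n)
      rwa [val_split v q l hfact n (K+2)] at this
    calc ‖γ n‖ * ‖FC ((l:ℝ)*2^n)‖
        ≤ 1 * (Mmass * cosProd (K+2) ((q*2^n : ℕ) : ℝ)) := by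
          apply mul_le_mul hγ1 hFC (norm_nonneg _)
          norm_num
      _ = Mmass * cosProd (K+2) ((q*2^n : ℕ) : ℝ) := by ring
  calc ‖∑ n ∈ Finset.Icc 1 N,
        γ n * ∫ x : ℝ,
          Complex.exp (2 * Real.pi * Complex.I * ((l : ℂ) * 2 ^ n * (x : ℂ))) ∂cantorMeasure‖
      ≤ ∑ n ∈ Finset.Icc 1 N, ‖γ n * ∫ x : ℝ,
          Complex.exp (2 * Real.pi * Complex.I * ((l : ℂ) * 2 ^ n * (x : ℂ))) ∂cantorMeasure‖ :=
        norm_sum_le _ _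
    _ ≤ ∑ n ∈ Finset.Icc 1 N, Mmass * cosProd (K+2) ((q*2^n : ℕ) : ℝ) :=
        Finset.sum_le_sum hpoint
    _ = Mmass * ∑ n ∈ Finset.Icc 1 N, cosProd (K+2) ((q*2^n : ℕ) : ℝ) := by
        rw [Finset.mul_sum]
    _ ≤ Mmass * 2^(K+2) := by
        apply mul_le_mul_of_nonneg_left (main_count hq0 hq3 hNK) Mmass_nonneg
    _ ≤ Mmass * (8 * (N:ℝ)^(0.922:ℝ)) := by
        apply mul_le_mul_of_nonneg_left (clog_bound hN1) Mmass_nonneg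
    _ ≤ (8 * Mmass + 1) * (N:ℝ)^(0.922:ℝ) := by
        have h0 : (0:ℝ) ≤ (N:ℝ)^(0.922:ℝ) := Real.rpow_nonneg (by positivity) _
        nlinarith [Mmass_nonneg]
end
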